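/- Over {a<b<c}, let w = a b^α c b^β a b^γ c b^δ a with α, β, γ, δ ≥ 1. If α = 2k for some positive integer k < δ, then w is M-equivalent to w' = b^k a c b^β a b^{γ+α} c b^{δ-k} a. -/

import Mathlib

/-!
Each count `|·|_v` with `|v| ≤ 3` obeys a product rule under concatenation, e.g.
`|uv|_abc = |u|_abc + |u|_ab |v|_c + |u|_a |v|_bc + |v|_abc`, so for words built from single
letters and `b`-blocks every coordinate of the M-vector is a polynomial in the block lengths,
and the claim becomes a polynomial identity once `α = 2k` and `δ = k + m` are substituted.
Passing from `w` to `w'`, the first `a` loses the `k` letters `b` moved in front of it while the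
second `a` gains `α - k` letters `b` after it, and dually for the two `c`'s and the `b`'s before
them; these balance exactly because `α = 2k`.
-/

open List

/-- Number of occurrences of `v` as a scattered subsequence of `w`. -/
def scount {α : Type*} [DecidableEq α] (w v : List α) : ℕ := w.sublists.count v

/-- The ternary ordered alphabet {a < b < c}. -/
inductive ABC | a | b | c
deriving DecidableEq

open ABC

/-- M-equivalence over the ordered alphabet {a < b < c}. -/
def MEq3 (w w' : List ABC) : Prop :=
  scount w [a] = scount w' [a] ∧ scount w [b] = scount w' [b] ∧
  scount w [c] = scount w' [c] ∧ scount w [a, b] = scount w' [a, b] ∧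
  scount w [b, c] = scount w' [b, c] ∧ scount w [a, b, c] = scount w' [a, b, c]

/-- Projection onto {a, c}: erase all b's. -/
def projAC (w : List ABC) : List ABC := w.filter (· ≠ b)

abbrev A (k : ℕ) : List ABC := List.replicate k a
abbrev B (k : ℕ) : List ABC := List.replicate k b
abbrev C (k : ℕ) : List ABC := List.replicate k c


section Scount

variable {σ : Type*} [DecidableEq σ]

lemma scount_eq_count_sublists' (w v : List σ) : scount w v = w.sublists'.count v :=
  (sublists_perm_sublists' w).count_eq v

lemma scount_nil_right (w : List σ) : scount w [] = 1 := by
  induction w with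
  | nil => rfl
  | cons x w ih =>
    rw [scount_eq_count_sublists', sublists'_cons, count_append, ← scount_eq_count_sublists', ih,
      count_eq_zero_of_not_mem (by simp)]

lemma scount_nil_cons (y : σ) (t : List σ) : scount [] (y :: t) = 0 := by
  simp [scount]

lemma scount_cons_cons (x y : σ) (w t : List σ) :
    scount (x :: w) (y :: t) = scount w (y :: t) + if y = x then scount w t else 0 := by
  simp only [scount_eq_count_sublists', sublists'_cons, count_append]
  split_ifs with hyx
  · rw [hyx, count_map_of_injective _ _ cons_injective]
  · exact congrArg _ (count_eq_zero_of_not_mem (by simp [Ne.symm hyx]))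

lemma scount_eq_zero_of_mem_of_not_mem {w v : List σ} {y : σ} (hv : y ∈ v) (hw : y ∉ w) :
    scount w v = 0 :=
  count_eq_zero_of_not_mem fun hs => hw ((mem_sublists.1 hs).subset hv)

lemma scount_replicate_singleton (n : ℕ) (x : σ) : scount (replicate n x) [x] = n := by
  induction n with
  | zero => exact scount_nil_cons x []
  | succ n ih => rw [replicate_succ, scount_cons_cons, ih, if_pos rfl, scount_nil_right]

lemma scount_append_singleton (u v : List σ) (x : σ) :
    scount (u ++ v) [x] = scount u [x] + scount v [x] := by
  induction u with
  | nil => simp [scount_nil_cons]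
  | cons y u ih =>
    simp only [cons_append, scount_cons_cons, ih, scount_nil_right]
    omega

lemma scount_append_pair (u v : List σ) (x y : σ) :
    scount (u ++ v) [x, y] = scount u [x, y] + scount u [x] * scount v [y] + scount v [x, y] := by
  induction u with
  | nil => simp [scount_nil_cons]
  | cons z u ih =>
    simp only [cons_append, scount_cons_cons, ih, scount_append_singleton, scount_nil_right]
    split <;> ring

lemma scount_append_triple (u v : List σ) (x y z : σ) :
    scount (u ++ v) [x, y, z] = scount u [x, y, z] + scount u [x, y] * scount v [z]
      + scount u [x] * scount v [y, z] + scount v [x, y, z] := by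
  induction u with
  | nil => simp [scount_nil_cons]
  | cons w u ih =>
    simp only [cons_append, scount_cons_cons, ih, scount_append_pair, scount_nil_right]
    split <;> ring

end Scount

theorem stmt_8_general (α β γ δ k : ℕ)
    (hkδ : k < δ) (hα2k : α = 2 * k) :
    MEq3 ([a] ++ B α ++ [c] ++ B β ++ [a] ++ B γ ++ [c] ++ B δ ++ [a])
      (B k ++ [a] ++ [c] ++ B β ++ [a] ++ B (γ + α) ++ [c] ++ B (δ - k) ++ [a]) := by
  obtain ⟨m, rfl⟩ : ∃ m, δ = k + m := ⟨δ - k, by omega⟩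
  subst hα2k
  have ha (n : ℕ) : a ∉ B n := by simp
  have hc (n : ℕ) : c ∉ B n := by simp
  refine ⟨?_, ?_, ?_, ?_, ?_, ?_⟩ <;>
    simp only [Nat.add_sub_cancel_left, scount_append_triple, scount_append_pair, scount_append_singleton,
      scount_replicate_singleton, scount_eq_zero_of_mem_of_not_mem (mem_cons_self ..) (ha _),
      scount_eq_zero_of_mem_of_not_mem (mem_cons_self ..) (hc _),
      scount_eq_zero_of_mem_of_not_mem (by simp : c ∈ [b, c]) (hc _),
      scount_cons_cons, scount_nil_cons, scount_nil_right, reduceCtorEq, if_true, if_false] <;>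
    ring

theorem stmt_8 (α β γ δ k : ℕ)
    (hα : 1 ≤ α) (hβ : 1 ≤ β) (hγ : 1 ≤ γ) (hδ : 1 ≤ δ)
    (hk : 1 ≤ k) (hkδ : k < δ) (hα2k : α = 2 * k) :
    MEq3 ([a] ++ B α ++ [c] ++ B β ++ [a] ++ B γ ++ [c] ++ B δ ++ [a])
      (B k ++ [a] ++ [c] ++ B β ++ [a] ++ B (γ + α) ++ [c] ++ B (δ - k) ++ [a]) :=
  stmt_8_general α β γ δ k hkδ hα2k
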